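/- Let ρ ≥ 1, d ≥ 1, and r ≥ 1 be integers. For (t, s) ∈ ℂ², let N(t, s) be the (1 + r) × (ρ + 1) complex matrix whose top row has entries t^{ρ−j} s^j for j = 0, …, ρ, and whose remaining r rows have entries N_{ij}(t, s) = q_{ij}(t, s), where each q_{ij} is a homogeneous polynomial of degree d in the two variables t, s. (Since each row of N is homogeneous, the condition rank N(t, s) ≤ 1 depends only on the point (t : s) ∈ P^1(ℂ).) Suppose there exists (t₀, s₀) ∈ ℂ² \ {(0,0)} with rank N(t₀, s₀) ≥ 2. Then the set of points (t : s) ∈ P^1(ℂ) at which rank N(t, s) ≤ 1 is finite and has at most ρ + d elements. -/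
import Mathlib

open MvPolynomial Matrix in
lemma degree_fin_two' (m : Fin 2 →₀ ℕ) : Finsupp.degree m = m 0 + m 1 := by
  rw [Finsupp.degree, ← Fin.sum_univ_two (f := fun i => m i)]
  exact Finset.sum_subset (Finset.subset_univ _)
    (fun i _ hi => Finsupp.notMem_support_iff.mp hi)

open MvPolynomial in
lemma support_deg_two {P : MvPolynomial (Fin 2) ℂ} {n : ℕ} (hP : P.IsHomogeneous n)
    {m : Fin 2 →₀ ℕ} (hm : m ∈ P.support) : m 0 + m 1 = n := by
  rw [← degree_fin_two' m, Finsupp.degree_eq_weight_one]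
  exact hP (MvPolynomial.mem_support_iff.mp hm)

open MvPolynomial in
lemma eval_homog_smul {P : MvPolynomial (Fin 2) ℂ} {n : ℕ} (hP : P.IsHomogeneous n)
    (c t s : ℂ) : eval ![c * t, c * s] P = c ^ n * eval ![t, s] P := by
  rw [eval_eq', eval_eq', Finset.mul_sum]
  refine Finset.sum_congr rfl fun m hm => ?_
  have h := support_deg_two hP hm
  rw [Fin.prod_univ_two, Fin.prod_univ_two]
  simp only [Matrix.cons_val_zero, Matrix.cons_val_one, Matrix.head_cons]
  rw [mul_pow, mul_pow, ← h, pow_add]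
  ring

open MvPolynomial in
lemma proj_zero_set_bound {n : ℕ} {P : MvPolynomial (Fin 2) ℂ} (hP : P.IsHomogeneous n)
    (t₁ s₁ : ℂ) (hev : eval ![t₁, s₁] P ≠ 0) :
    {p : Projectivization ℂ (ℂ × ℂ) | ∃ (v : ℂ × ℂ) (hv : v ≠ 0),
        Projectivization.mk ℂ v hv = p ∧ eval ![v.1, v.2] P = 0}.Finite ∧
    {p : Projectivization ℂ (ℂ × ℂ) | ∃ (v : ℂ × ℂ) (hv : v ≠ 0),
        Projectivization.mk ℂ v hv = p ∧ eval ![v.1, v.2] P = 0}.ncard ≤ n := by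
  classical
  set Z := {p : Projectivization ℂ (ℂ × ℂ) | ∃ (v : ℂ × ℂ) (hv : v ≠ 0),
        Projectivization.mk ℂ v hv = p ∧ eval ![v.1, v.2] P = 0} with hZ
  set p₁ : Polynomial ℂ := ∑ m ∈ P.support, Polynomial.C (coeff m P) * Polynomial.X ^ (m 0)
    with hp₁
  have heval : ∀ x : ℂ, p₁.eval x = eval ![x, 1] P := by
    intro x
    rw [hp₁, Polynomial.eval_finset_sum, eval_eq']
    refine Finset.sum_congr rfl fun m hm => ?_
    rw [Fin.prod_univ_two]
    simp
  have hdeg : p₁.natDegree ≤ n := by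
    refine Polynomial.natDegree_sum_le_of_forall_le _ _ fun m hm => ?_
    refine le_trans (Polynomial.natDegree_C_mul_le _ _) ?_
    rw [Polynomial.natDegree_X_pow]
    have := support_deg_two hP hm
    omega
  have hcoeff : p₁.coeff n = eval ![(1:ℂ), 0] P := by
    rw [hp₁, Polynomial.finset_sum_coeff, eval_eq']
    refine Finset.sum_congr rfl fun m hm => ?_
    have h := support_deg_two hP hm
    rw [Polynomial.coeff_C_mul, Polynomial.coeff_X_pow, Fin.prod_univ_two]
    simp only [Matrix.cons_val_zero, Matrix.cons_val_one, Matrix.head_cons, one_pow, one_mul]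
    rcases Nat.eq_zero_or_pos (m 1) with h1 | h1
    · rw [h1, if_pos (by omega), pow_zero, mul_one]
    · rw [if_neg (by omega), zero_pow (by omega)]
  have haff : ∀ x : ℂ, ((x, (1:ℂ)) : ℂ × ℂ) ≠ 0 :=
    fun x h => one_ne_zero (congrArg Prod.snd h)
  have h10 : (((1:ℂ), (0:ℂ)) : ℂ × ℂ) ≠ 0 :=
    fun h => one_ne_zero (congrArg Prod.fst h)
  set g : ℂ → Projectivization ℂ (ℂ × ℂ) :=
    fun x => Projectivization.mk ℂ (x, (1:ℂ)) (haff x) with hg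
  set A : Set (Projectivization ℂ (ℂ × ℂ)) := g '' {x | p₁.IsRoot x} with hA
  have key : ∀ (v : ℂ × ℂ), v.2 ≠ 0 → eval ![v.1, v.2] P = 0 →
      p₁.eval (v.1 / v.2) = 0 := by
    intro v h2 h0
    rw [heval]
    have h := eval_homog_smul hP v.2⁻¹ v.1 v.2
    rw [inv_mul_cancel₀ h2] at h
    rw [div_eq_inv_mul, h, h0, mul_zero]
  have hmem : ∀ (v : ℂ × ℂ) (hv : v ≠ 0), v.2 ≠ 0 → eval ![v.1, v.2] P = 0 →
      Projectivization.mk ℂ v hv ∈ A := by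
    intro v hv h2 h0
    refine ⟨v.1 / v.2, key v h2 h0, ?_⟩
    rw [hg]
    rw [Projectivization.mk_eq_mk_iff']
    refine ⟨v.2⁻¹, Prod.ext ?_ ?_⟩
    · simp only [Prod.smul_fst, smul_eq_mul]
      rw [← div_eq_inv_mul]
    · simp only [Prod.smul_snd, smul_eq_mul]
      exact inv_mul_cancel₀ h2
  have hmeminf : ∀ (v : ℂ × ℂ) (hv : v ≠ 0), v.2 = 0 →
      Projectivization.mk ℂ v hv = Projectivization.mk ℂ ((1:ℂ), (0:ℂ)) h10 := by
    intro v hv h2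
    rw [Projectivization.mk_eq_mk_iff']
    exact ⟨v.1, Prod.ext (by simp) (by simp [h2])⟩
  rcases eq_or_ne (eval ![(1:ℂ), 0] P) 0 with hinf | hinf
  · -- the point at infinity may be a zero
    have hs₁ : s₁ ≠ 0 := by
      intro hs
      apply hev
      have h := eval_homog_smul hP t₁ 1 0
      rw [mul_one, mul_zero] at h
      rw [hs, h, hinf, mul_zero]
    have hp₁ne : p₁ ≠ 0 := by
      intro hzero
      apply hev
      have h := eval_homog_smul hP s₁ (t₁ / s₁) 1
      rw [mul_one, mul_div_cancel₀ _ hs₁] at h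
      rw [h, ← heval, hzero, Polynomial.eval_zero, mul_zero]
    have hdlt : p₁.natDegree < n := by
      rcases lt_or_eq_of_le hdeg with h | h
      · exact h
      · exact absurd (Polynomial.leadingCoeff_eq_zero.mp
          (by rw [Polynomial.leadingCoeff, h, hcoeff, hinf])) hp₁ne
    have hfinR : {x | p₁.IsRoot x}.Finite := Polynomial.finite_setOf_isRoot hp₁ne
    have hsub : Z ⊆ A ∪ {Projectivization.mk ℂ ((1:ℂ), (0:ℂ)) h10} := by
      rintro p ⟨v, hv, rfl, h0⟩
      rcases eq_or_ne v.2 0 with h2 | h2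
      · exact Or.inr (hmeminf v hv h2)
      · exact Or.inl (hmem v hv h2 h0)
    have hfinU : (A ∪ {Projectivization.mk ℂ ((1:ℂ), (0:ℂ)) h10}).Finite :=
      (hfinR.image _).union (Set.finite_singleton _)
    refine ⟨hfinU.subset hsub, ?_⟩
    have h1 : Z.ncard ≤ (A ∪ {Projectivization.mk ℂ ((1:ℂ), (0:ℂ)) h10}).ncard :=
      Set.ncard_le_ncard hsub hfinU
    have h2 := Set.ncard_union_le A {Projectivization.mk ℂ ((1:ℂ), (0:ℂ)) h10}
    have h3 : A.ncard ≤ {x | p₁.IsRoot x}.ncard := Set.ncard_image_le hfinR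
    have h4 : {x | p₁.IsRoot x}.ncard ≤ p₁.natDegree := by
      have he : {x | p₁.IsRoot x} = ↑p₁.roots.toFinset := by
        ext x
        simp [Polynomial.mem_roots, hp₁ne, Polynomial.IsRoot]
      rw [he, Set.ncard_coe_finset]
      exact le_trans (Multiset.toFinset_card_le _) (Polynomial.card_roots' p₁)
    have h5 := Set.ncard_singleton (Projectivization.mk ℂ ((1:ℂ), (0:ℂ)) h10)
    omega
  · -- the point at infinity is not a zero
    have hp₁ne : p₁ ≠ 0 := fun hzero => hinf (by rw [← hcoeff, hzero, Polynomial.coeff_zero])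
    have hfinR : {x | p₁.IsRoot x}.Finite := Polynomial.finite_setOf_isRoot hp₁ne
    have hsub : Z ⊆ A := by
      rintro p ⟨v, hv, rfl, h0⟩
      rcases eq_or_ne v.2 0 with h2 | h2
      · exfalso
        have h1 : v.1 ≠ 0 := fun h1 => hv (Prod.ext h1 h2)
        apply hinf
        have h := eval_homog_smul hP v.1 1 0
        rw [mul_one, mul_zero] at h
        have h' : eval ![v.1, v.2] P = v.1 ^ n * eval ![(1:ℂ), 0] P := by rw [← h, h2]
        rw [h0] at h'
        exact (mul_eq_zero.mp h'.symm).resolve_left (pow_ne_zero _ h1)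
      · exact hmem v hv h2 h0
    refine ⟨(hfinR.image _).subset hsub, ?_⟩
    have h1 : Z.ncard ≤ A.ncard := Set.ncard_le_ncard hsub (hfinR.image _)
    have h3 : A.ncard ≤ {x | p₁.IsRoot x}.ncard := Set.ncard_image_le hfinR
    have h4 : {x | p₁.IsRoot x}.ncard ≤ p₁.natDegree := by
      have he : {x | p₁.IsRoot x} = ↑p₁.roots.toFinset := by
        ext x
        simp [Polynomial.mem_roots, hp₁ne, Polynomial.IsRoot]
      rw [he, Set.ncard_coe_finset]
      exact le_trans (Multiset.toFinset_card_le _) (Polynomial.card_roots' p₁)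
    omega


open Matrix in
lemma rank_submatrix_le_general {m n m' n' : Type*} [Fintype m] [Fintype n]
    [Fintype m'] [Fintype n'] [DecidableEq m] [DecidableEq n]
    (A : Matrix m n ℂ) (f : m' → m) (g : n' → n) :
    (A.submatrix f g).rank ≤ A.rank := by
  have hEq : A.submatrix f g =
      (Matrix.of fun (a : m') (x : m) => if x = f a then (1:ℂ) else 0) * A *
      (Matrix.of fun (y : n) (b : n') => if y = g b then (1:ℂ) else 0) := by
    ext a b
    simp [Matrix.mul_apply, ite_mul, mul_ite, Finset.sum_ite_eq', Finset.sum_ite_eq]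
  rw [hEq]
  exact le_trans (Matrix.rank_mul_le_left _ _) (Matrix.rank_mul_le_right _ _)

open Matrix in
lemma rank_vecMulVec_le' {m n : Type*} [Fintype m] [Fintype n]
    (w : m → ℂ) (v : n → ℂ) : (Matrix.vecMulVec w v).rank ≤ 1 := by
  rw [Matrix.vecMulVec_eq (Fin 1)]
  exact le_trans (Matrix.rank_mul_le_left _ _)
    (le_trans (Matrix.rank_le_card_width _) (by simp))

open MvPolynomial in
/-- Degree bound for the second-order foci: let `N(t, s)` be the `(1 + r) × (ρ + 1)` matrix
whose top row has entries the monomials `t^{ρ−j} s^j`, and whose remaining `r` rows have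
entries homogeneous polynomials of degree `d` in `t, s`. If `N` has rank at least 2 at some
point `(t₀, s₀) ≠ (0, 0)`, then the set of points `(t : s) ∈ P¹(ℂ)` at which
`rank N(t, s) ≤ 1` is finite, with at most `ρ + d` elements. -/
theorem second_order_foci_degree_bound
    (ρ d r : ℕ) (hρ : 1 ≤ ρ) (hd : 1 ≤ d) (hr : 1 ≤ r)
    (q : Fin r → Fin (ρ + 1) → MvPolynomial (Fin 2) ℂ)
    (hq : ∀ i j, (q i j).IsHomogeneous d)
    (N : ℂ → ℂ → Matrix (Fin 1 ⊕ Fin r) (Fin (ρ + 1)) ℂ)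
    (hN : ∀ t s : ℂ, N t s =
      Matrix.fromRows
        (Matrix.of fun (_ : Fin 1) (j : Fin (ρ + 1)) => t ^ (ρ - j.1) * s ^ j.1)
        (Matrix.of fun (i : Fin r) (j : Fin (ρ + 1)) =>
          MvPolynomial.eval ![t, s] (q i j)))
    (hrank : ∃ t₀ s₀ : ℂ, (t₀, s₀) ≠ (0, 0) ∧ 2 ≤ (N t₀ s₀).rank) :
    {p : Projectivization ℂ (ℂ × ℂ) |
        ∃ (v : ℂ × ℂ) (hv : v ≠ 0),
          Projectivization.mk ℂ v hv = p ∧ (N v.1 v.2).rank ≤ 1}.Finite ∧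
    {p : Projectivization ℂ (ℂ × ℂ) |
        ∃ (v : ℂ × ℂ) (hv : v ≠ 0),
          Projectivization.mk ℂ v hv = p ∧ (N v.1 v.2).rank ≤ 1}.ncard ≤ ρ + d := by
  classical
  obtain ⟨t₀, s₀, hne0, hrk⟩ := hrank
  -- the monomials of the top row, as polynomials
  set T : Fin (ρ + 1) → MvPolynomial (Fin 2) ℂ :=
    fun j => X 0 ^ (ρ - j.1) * X 1 ^ j.1 with hTdef
  have hT : ∀ j : Fin (ρ + 1), (T j).IsHomogeneous ρ := by
    intro j
    have h := (isHomogeneous_X_pow (R := ℂ) (0 : Fin 2) (ρ - j.1)).mul (isHomogeneous_X_pow (1 : Fin 2) j.1)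
    rw [Nat.sub_add_cancel (Nat.lt_succ_iff.mp j.2)] at h
    rw [hTdef]
    exact h
  -- a column index where the top row does not vanish at (t₀, s₀)
  obtain ⟨j₀, hj₀ne⟩ : ∃ j₀ : Fin (ρ + 1), t₀ ^ (ρ - j₀.1) * s₀ ^ j₀.1 ≠ 0 := by
    rcases eq_or_ne t₀ 0 with ht | ht
    · have hs : s₀ ≠ 0 := fun hs => hne0 (by rw [ht, hs])
      exact ⟨⟨ρ, Nat.lt_succ_self ρ⟩, by
        simp only [Nat.sub_self, pow_zero, one_mul]
        exact pow_ne_zero _ hs⟩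
    · exact ⟨⟨0, Nat.succ_pos ρ⟩, by
        simp only [Nat.sub_zero, pow_zero, mul_one]
        exact pow_ne_zero _ ht⟩
  -- there is a 2×2 minor involving the top row that is nonzero at (t₀, s₀)
  have hmain : ∃ (i : Fin r) (k : Fin (ρ + 1)),
      eval ![t₀, s₀] (T j₀ * q i k - T k * q i j₀) ≠ 0 := by
    by_contra hall
    push_neg at hall
    have hprop : ∀ (i : Fin r) (k : Fin (ρ + 1)),
        (t₀ ^ (ρ - j₀.1) * s₀ ^ j₀.1) * eval ![t₀, s₀] (q i k)
          = (t₀ ^ (ρ - k.1) * s₀ ^ k.1) * eval ![t₀, s₀] (q i j₀) := by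
      intro i k
      have h := hall i k
      simp only [hTdef, map_sub, map_mul, map_pow, eval_X, Matrix.cons_val_zero,
        Matrix.cons_val_one, Matrix.head_cons, sub_eq_zero] at h
      linear_combination h
    have hvmv : N t₀ s₀ = Matrix.vecMulVec
        (Sum.elim (fun _ : Fin 1 => (1 : ℂ))
          (fun i => eval ![t₀, s₀] (q i j₀) / (t₀ ^ (ρ - j₀.1) * s₀ ^ j₀.1)))
        (fun j : Fin (ρ + 1) => t₀ ^ (ρ - j.1) * s₀ ^ j.1) := by
      rw [hN]
      ext a j
      cases a with
      | inl a =>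
        simp [Matrix.vecMulVec_apply]
      | inr i =>
        rw [Matrix.fromRows_apply_inr, Matrix.vecMulVec_apply]
        simp only [Sum.elim_inr, Matrix.of_apply]
        rw [div_mul_eq_mul_div, eq_div_iff hj₀ne]
        linear_combination hprop i j
    rw [hvmv] at hrk
    have := rank_vecMulVec_le'
      (Sum.elim (fun _ : Fin 1 => (1 : ℂ))
        (fun i => eval ![t₀, s₀] (q i j₀) / (t₀ ^ (ρ - j₀.1) * s₀ ^ j₀.1)))
      (fun j : Fin (ρ + 1) => t₀ ^ (ρ - j.1) * s₀ ^ j.1)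
    omega
  obtain ⟨i, k, hik⟩ := hmain
  set P : MvPolynomial (Fin 2) ℂ := T j₀ * q i k - T k * q i j₀ with hPdef
  have hPhom : P.IsHomogeneous (ρ + d) := ((hT j₀).mul (hq i k)).sub ((hT k).mul (hq i j₀))
  -- points of low rank are zeros of P
  have hcont : ∀ (v : ℂ × ℂ), v ≠ 0 → (N v.1 v.2).rank ≤ 1 → eval ![v.1, v.2] P = 0 := by
    intro v hv hr1
    by_contra hPne
    have hM : ((N v.1 v.2).submatrix ![Sum.inl 0, Sum.inr i] ![j₀, k]).det ≠ 0 := by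
      rw [Matrix.det_fin_two]
      simp only [Matrix.submatrix_apply, Matrix.cons_val_zero, Matrix.cons_val_one,
        Matrix.head_cons]
      rw [hN]
      rw [Matrix.fromRows_apply_inl, Matrix.fromRows_apply_inr,
        Matrix.fromRows_apply_inl, Matrix.fromRows_apply_inr]
      simp only [Matrix.of_apply]
      intro h0
      apply hPne
      simp only [hPdef, hTdef, map_sub, map_mul, map_pow, eval_X, Matrix.cons_val_zero,
        Matrix.cons_val_one, Matrix.head_cons]
      linear_combination h0
    have hrM : ((N v.1 v.2).submatrix ![Sum.inl 0, Sum.inr i] ![j₀, k]).rank = 2 := by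
      rw [Matrix.rank_of_isUnit _
        ((Matrix.isUnit_iff_isUnit_det _).mpr (isUnit_iff_ne_zero.mpr hM))]
      simp
    have hle := rank_submatrix_le_general (N v.1 v.2) ![Sum.inl 0, Sum.inr i] ![j₀, k]
    omega
  obtain ⟨hfin, hcard⟩ := proj_zero_set_bound hPhom t₀ s₀ hik
  have hsub : {p : Projectivization ℂ (ℂ × ℂ) |
        ∃ (v : ℂ × ℂ) (hv : v ≠ 0),
          Projectivization.mk ℂ v hv = p ∧ (N v.1 v.2).rank ≤ 1} ⊆
      {p : Projectivization ℂ (ℂ × ℂ) | ∃ (v : ℂ × ℂ) (hv : v ≠ 0),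
        Projectivization.mk ℂ v hv = p ∧ eval ![v.1, v.2] P = 0} := by
    rintro p ⟨v, hv, rfl, hr1⟩
    exact ⟨v, hv, rfl, hcont v hv hr1⟩
  exact ⟨hfin.subset hsub, le_trans (Set.ncard_le_ncard hsub hfin) hcard⟩
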